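/- arXiv:2102.10299 — 4 statements merged into one kernel-verified Lean document; each statement's English description precedes it below -/
import Mathlib

section
/- A proper ideal I of a commutative ring R is a quasi J-ideal if and only if for all a, b in R with ab ∈ I, either a ∈ J(R) or b ∈ √I. -/
def IsJIdeal {R : Type*} [CommRing R] (I : Ideal R) : Prop :=
  I ≠ ⊤ ∧ ∀ a b : R, a * b ∈ I → a ∉ Ideal.jacobson (⊥ : Ideal R) → b ∈ I

def IsQuasiJIdeal {R : Type*} [CommRing R] (I : Ideal R) : Prop :=
  I ≠ ⊤ ∧ IsJIdeal I.radical

/- If `(ab)ⁿ ∈ I` and `a ∉ J(R)`, then `aⁿ ∉ J(R)` because `J(R)` is a radical ideal, so the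
hypothesis applied to `aⁿ bⁿ` gives `bⁿ ∈ √I`, i.e. `b ∈ √I`. -/

theorem isJIdeal_radical_iff {R : Type*} [CommRing R] {I : Ideal R} (hI : I ≠ ⊤) :
    IsJIdeal I.radical ↔
      ∀ a b : R, a * b ∈ I → a ∈ Ideal.jacobson (⊥ : Ideal R) ∨ b ∈ I.radical := by
  refine ⟨fun ⟨_, hJ⟩ a b hab ↦ or_iff_not_imp_left.2 (hJ a b (Ideal.le_radical hab)),
    fun h ↦ ⟨by rwa [Ne, Ideal.radical_eq_top], ?_⟩⟩
  rintro a b ⟨n, hn⟩ ha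
  rw [mul_pow] at hn
  have han : a ^ n ∉ Ideal.jacobson (⊥ : Ideal R) :=
    fun h' ↦ ha (Ideal.isRadical_jacobson ⊥ ⟨n, h'⟩)
  exact Ideal.radical_isRadical I ⟨n, (h _ _ hn).resolve_left han⟩

theorem stmt0 {R : Type*} [CommRing R] (I : Ideal R) (hI : I ≠ ⊤) :
    IsQuasiJIdeal I ↔
      ∀ a b : R, a * b ∈ I → a ∈ Ideal.jacobson (⊥ : Ideal R) ∨ b ∈ I.radical := by
  rw [IsQuasiJIdeal, isJIdeal_radical_iff hI, and_iff_right hI]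
end

section
/- A proper ideal I of a commutative ring R is a quasi J-ideal if and only if for every element a ∈ R and every ideal K of R with aK ⊆ I, either a ∈ J(R) or K ⊆ √I. -/
section

open Ideal

variable {R : Type*} [CommRing R]

theorem IsJIdeal.mem_jacobson_or_le {J K : Ideal R} (hJ : IsJIdeal J) {a : R}
    (h : ∀ x ∈ K, a * x ∈ J) : a ∈ jacobson (⊥ : Ideal R) ∨ K ≤ J :=
  or_iff_not_imp_left.mpr fun ha x hx => hJ.2 a x (h x hx) ha

theorem Ideal.mul_mem_of_mem_span_singleton {I : Ideal R} {a b x : R} (hab : a * b ∈ I)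
    (hx : x ∈ span {b}) : a * x ∈ I := by
  obtain ⟨c, rfl⟩ := mem_span_singleton'.mp hx
  rw [mul_left_comm]
  exact I.mul_mem_left c hab

/-- Test the condition on `a ^ n` and `K = (b ^ n)` where `(a * b) ^ n ∈ I`; the Jacobson
radical is a radical ideal, so `a ^ n ∈ J(R)` would force `a ∈ J(R)`. -/
theorem isJIdeal_radical_of_forall_mul_mem {I : Ideal R} (hI : I ≠ ⊤)
    (h : ∀ (a : R) (K : Ideal R), (∀ x ∈ K, a * x ∈ I) →
      a ∈ jacobson (⊥ : Ideal R) ∨ K ≤ I.radical) :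
    IsJIdeal I.radical := by
  refine ⟨radical_eq_top.not.mpr hI, fun a b ⟨n, hab⟩ ha => ?_⟩
  rw [mul_pow] at hab
  rcases h (a ^ n) (span {b ^ n}) fun x hx => mul_mem_of_mem_span_singleton hab hx with
    han | hbn
  · exact absurd (isRadical_jacobson ⊥ ⟨n, han⟩) ha
  · exact radical_isRadical I ⟨n, hbn (mem_span_singleton_self _)⟩

end

theorem stmt1 {R : Type*} [CommRing R] (I : Ideal R) (hI : I ≠ ⊤) :
    IsQuasiJIdeal I ↔
      ∀ (a : R) (K : Ideal R), (∀ x ∈ K, a * x ∈ I) →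
        a ∈ Ideal.jacobson (⊥ : Ideal R) ∨ K ≤ I.radical :=
  ⟨fun ⟨_, hJ⟩ _ _ hK => hJ.mem_jacobson_or_le fun x hx => Ideal.le_radical (hK x hx),
    fun h => ⟨hI, isJIdeal_radical_of_forall_mul_mem hI h⟩⟩
end

section
/- A proper ideal I of a commutative ring R is a quasi J-ideal if and only if for all ideals K, L of R with KL ⊆ I, either K ⊆ J(R) or L ⊆ √I. -/
section

variable {R : Type*} [CommRing R]

theorem IsJIdeal.mul_le {P K L : Ideal R} (hP : IsJIdeal P) (hKL : K * L ≤ P) :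
    K ≤ Ideal.jacobson (⊥ : Ideal R) ∨ L ≤ P := by
  refine or_iff_not_imp_left.mpr fun hK => ?_
  obtain ⟨a, haK, haJ⟩ := SetLike.not_le_iff_exists.mp hK
  exact fun b hbL => hP.2 a b (hKL (Ideal.mul_mem_mul haK hbL)) haJ

/-- Apply the hypothesis to `(aⁿ) * (bⁿ) ≤ I`, where `(a * b)ⁿ ∈ I`; as `J(R)` is a radical ideal,
the alternative `aⁿ ∈ J(R)` would force `a ∈ J(R)`. -/
theorem isJIdeal_radical_of_forall_mul_le {I : Ideal R} (hI : I ≠ ⊤)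
    (h : ∀ K L : Ideal R, K * L ≤ I → K ≤ Ideal.jacobson (⊥ : Ideal R) ∨ L ≤ I.radical) :
    IsJIdeal I.radical := by
  refine ⟨fun htop => hI (Ideal.radical_eq_top.mp htop), fun a b ⟨n, hn⟩ haJ => ?_⟩
  have hspan : Ideal.span {a ^ n} * Ideal.span {b ^ n} ≤ I := by
    rw [Ideal.span_singleton_mul_span_singleton, Ideal.span_singleton_le_iff_mem, ← mul_pow]
    exact hn
  rcases h _ _ hspan with hK | hL
  · exact absurd (Ideal.isRadical_jacobson ⊥ ⟨n, hK (Ideal.mem_span_singleton_self _)⟩) haJ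
  · obtain ⟨m, hm⟩ := hL (Ideal.mem_span_singleton_self _)
    exact ⟨n * m, by rwa [pow_mul]⟩

end

theorem stmt2 {R : Type*} [CommRing R] (I : Ideal R) (hI : I ≠ ⊤) :
    IsQuasiJIdeal I ↔
      ∀ K L : Ideal R, K * L ≤ I →
        K ≤ Ideal.jacobson (⊥ : Ideal R) ∨ L ≤ I.radical := by
  constructor
  · rintro ⟨-, hJ⟩ K L hKL
    exact hJ.mul_le (hKL.trans I.le_radical)
  · exact fun h => ⟨hI, isJIdeal_radical_of_forall_mul_le hI h⟩
end

section
/- A commutative ring R is quasi presimplifiable if and only if every element a ∈ R with Ann(a) ⊄ N(R) lies in J(R); equivalently, NZ(R) ⊆ J(R), where NZ(R) is the set of elements whose annihilator is not contained in the nilradical. -/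
/-! If `x * a = 0` then `x = x * (a * y + 1)` for every `y`, and `a ∈ J(R)` exactly when all the
`a * y + 1` are units. Conversely `a = a * b` means `a * (b - 1) = 0`, and `b - 1 ∈ J(R)` makes `b`
a unit. -/

def QuasiPresimplifiable (R : Type*) [CommRing R] : Prop :=
  ∀ a b : R, a = a * b → a ∈ nilradical R ∨ IsUnit b

theorem QuasiPresimplifiable.mem_jacobson_bot_of_mul_eq_zero {R : Type*} [CommRing R]
    (h : QuasiPresimplifiable R) {x a : R} (hxa : x * a = 0) (hx : x ∉ nilradical R) :
    a ∈ Ideal.jacobson (⊥ : Ideal R) :=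
  Ideal.mem_jacobson_bot.2 fun y =>
    (h x _ (by rw [mul_add, ← mul_assoc, hxa, zero_mul, zero_add, mul_one])).resolve_left hx

theorem quasiPresimplifiable_of_mem_jacobson_bot {R : Type*} [CommRing R]
    (h : ∀ x a : R, x * a = 0 → x ∉ nilradical R → a ∈ Ideal.jacobson (⊥ : Ideal R)) :
    QuasiPresimplifiable R := fun a b hab =>
  or_iff_not_imp_left.2 fun ha =>
    Ideal.isUnit_of_sub_one_mem_jacobson_bot b
      (h a _ (by rw [mul_sub, mul_one, ← hab, sub_self]) ha)

theorem stmt18 {R : Type*} [CommRing R] :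
    QuasiPresimplifiable R ↔
      ∀ a : R, ¬ ({x : R | x * a = 0} ⊆ (nilradical R : Set R)) →
        a ∈ Ideal.jacobson (⊥ : Ideal R) := by
  constructor
  · intro h a ha
    obtain ⟨x, hxa, hx⟩ := Set.not_subset.1 ha
    exact h.mem_jacobson_bot_of_mul_eq_zero hxa hx
  · exact fun h => quasiPresimplifiable_of_mem_jacobson_bot fun x a hxa hx =>
      h a (Set.not_subset.2 ⟨x, hxa, hx⟩)
end
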